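/- arXiv:1409.7996 — 4 statements merged into one kernel-verified Lean document; each statement's English description precedes it below -/
import Mathlib

section
/- For a weakly decreasing sequence of integers λ = (λ_1 ≥ … ≥ λ_n), the Schur polynomial s_λ(x_1,…,x_n) equals the sum over all Gelfand–Tsetlin patterns A with top row λ of the monomials x_1^{μ_1(A)} ⋯ x_n^{μ_n(A)}, where μ_i(A) = Σ_j A_{i-1,j} − Σ_j A_{i,j} (with the convention A_{n,j} = 0). -/
open scoped BigOperators Classical

/-- Index type for Gelfand–Tsetlin pattern positions: (row, column), 0-based. -/
abbrev GTIdx (n : ℕ) := Fin n × Fin n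

/-- A position (i,j) is a valid pattern position iff i + j < n (row i has columns 0..n-1-i). -/
def GTValid (n : ℕ) (p : GTIdx n) : Prop := (p.1 : ℕ) + (p.2 : ℕ) < n

/-- Entry of a real point at natural-number coordinates (0 outside the index range). -/
noncomputable def entryR {n : ℕ} (A : GTIdx n → ℝ) (i j : ℕ) : ℝ :=
  if h : i < n ∧ j < n then A (⟨i, h.1⟩, ⟨j, h.2⟩) else 0

/-- Entry of an integer point at natural-number coordinates (0 outside the index range). -/
def entryZ {n : ℕ} (A : GTIdx n → ℤ) (i j : ℕ) : ℤ :=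
  if h : i < n ∧ j < n then A (⟨i, h.1⟩, ⟨j, h.2⟩) else 0

/-- The Gelfand–Tsetlin polytope of λ: top row equal to λ, interlacing inequalities,
and (as a normalization embedding it in a finite-dimensional space) zero at invalid positions. -/
def GTPoly (n : ℕ) (lam : Fin n → ℝ) : Set (GTIdx n → ℝ) :=
  {A | (∀ j : Fin n, entryR A 0 j = lam j)
    ∧ (∀ i j : ℕ, i + 1 + j < n →
        entryR A (i+1) j ≤ entryR A i j ∧ entryR A i (j+1) ≤ entryR A (i+1) j)
    ∧ (∀ p : GTIdx n, ¬ GTValid n p → A p = 0)}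

/-- Integer Gelfand–Tsetlin patterns with top row λ. -/
def GTPat (n : ℕ) (lam : Fin n → ℤ) : Set (GTIdx n → ℤ) :=
  {A | (∀ j : Fin n, entryZ A 0 j = lam j)
    ∧ (∀ i j : ℕ, i + 1 + j < n →
        entryZ A (i+1) j ≤ entryZ A i j ∧ entryZ A i (j+1) ≤ entryZ A (i+1) j)
    ∧ (∀ p : GTIdx n, ¬ GTValid n p → A p = 0)}

/-- The weight of a pattern: μ_i = (sum of row i-1) - (sum of row i), 1-based;
here `i : Fin n` is 0-based, so `wtZ A i = (row i sum) - (row (i+1) sum)`. -/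
def wtZ {n : ℕ} (A : GTIdx n → ℤ) (i : Fin n) : ℤ :=
  (∑ j : Fin n, entryZ A i j) - ∑ j : Fin n, entryZ A ((i : ℕ) + 1) j

noncomputable def wtR {n : ℕ} (A : GTIdx n → ℝ) (i : Fin n) : ℝ :=
  (∑ j : Fin n, entryR A i j) - ∑ j : Fin n, entryR A ((i : ℕ) + 1) j

/-- Multiset of entries of row i. -/
noncomputable def rowM {n : ℕ} (A : GTIdx n → ℝ) (i : ℕ) : Multiset ℝ :=
  (Finset.univ.filter (fun j : Fin n => i + (j : ℕ) < n)).val.map (fun j => entryR A i (j : ℕ))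

/-- Valid pattern positions (the nodes of the ambient graph T). -/
abbrev GTNode (n : ℕ) := {p : GTIdx n // GTValid n p}

/-- `upEdge n p q` : q is an upper neighbour of p in the triangular graph T,
i.e. q = (i-1, j) or (i-1, j+1) where p = (i, j). -/
def upEdge (n : ℕ) (p q : GTIdx n) : Prop :=
  GTValid n p ∧ GTValid n q ∧ (q.1 : ℕ) + 1 = (p.1 : ℕ) ∧
    ((q.2 : ℕ) = (p.2 : ℕ) ∨ (q.2 : ℕ) = (p.2 : ℕ) + 1)

/-- The equality graph Γ_v of a point v of the GT polytope: nodes are valid positions,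
edges join a position to an upper neighbour carrying an equal entry. -/
def Gamma (n : ℕ) (A : GTIdx n → ℝ) : SimpleGraph (GTNode n) where
  Adj p q := (upEdge n p.1 q.1 ∨ upEdge n q.1 p.1) ∧ A p.1 = A q.1
  symm := by
    constructor
    rintro p q ⟨h, e⟩
    exact ⟨h.symm, e.symm⟩
  loopless := by
    constructor
    rintro p ⟨h | h, _⟩ <;> exact absurd h.2.2.1 (by omega)

/-- Tangent cone of a convex set P at a point v. -/
def tangentCone {E : Type*} [AddCommGroup E] [Module ℝ E] (P : Set E) (v : E) : Set E :=
  {y | ∃ x ∈ P, ∃ t : ℝ, 0 ≤ t ∧ y = v + t • (x - v)}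

/-- The ray from v in direction ε. -/
def raySet {E : Type*} [AddCommGroup E] [Module ℝ E] (v ε : E) : Set E :=
  {y | ∃ t : ℝ, 0 ≤ t ∧ y = v + t • ε}

/-- ε is the direction of an edge (one-dimensional extreme face) of the cone C with apex v. -/
def IsEdgeDir {E : Type*} [AddCommGroup E] [Module ℝ E] (C : Set E) (v ε : E) : Prop :=
  ε ≠ 0 ∧ IsExtreme ℝ C (raySet v ε)

/-- Direction-vector pattern for edges at a simplicial vertex: all nonzero coordinates lie
in rows a..b, one per row, and all are equal to c. -/
def simpDir (n : ℕ) (a b : ℕ) (c : ℝ) (ε : GTIdx n → ℝ) : Prop :=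
  (∀ p : GTIdx n, ε p ≠ 0 → GTValid n p ∧ a ≤ (p.1 : ℕ) ∧ (p.1 : ℕ) ≤ b)
  ∧ (∀ r : ℕ, a ≤ r → r ≤ b → ∃! p : GTIdx n, (p.1 : ℕ) = r ∧ ε p ≠ 0)
  ∧ (∀ p : GTIdx n, ε p ≠ 0 → ε p = c)

/-- A simplicial vertex: a vertex (extreme point) of the GT polytope whose equality graph
is acyclic. -/
def IsSimpVertex (n : ℕ) (lam : Fin n → ℝ) (A : GTIdx n → ℝ) : Prop :=
  A ∈ Set.extremePoints ℝ (GTPoly n lam) ∧ (Gamma n A).IsAcyclic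

/- ### Rational functions, integer-point transforms, and the specialization F -/

/-- Field of rational functions in variables indexed by ι. -/
abbrev KK (ι : Type) := FractionRing (MvPolynomial ι ℚ)

/-- The monomial t^u, u ∈ ℤ^ι, inside the rational function field. -/
noncomputable def tmon (ι : Type) [Fintype ι] (u : ι → ℤ) : KK ι :=
  ∏ i, (algebraMap (MvPolynomial ι ℚ) (KK ι) (MvPolynomial.X i)) ^ (u i)

/-- Indicator (as coefficient function of a formal Laurent series) of the integer points of S. -/
noncomputable def indSet {ι : Type} (S : Set (ι → ℝ)) : (ι → ℤ) → ℚ :=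
  fun a => if (fun i => (a i : ℝ)) ∈ S then 1 else 0

/-- `Represents r f` : the rational function r is the integer-point transform of the formal
Laurent series with coefficient function f, i.e. there is a nonzero Laurent polynomial q such
that q·f is a (finitely supported) Laurent polynomial g and r·q = g as rational functions. -/
noncomputable def Represents {ι : Type} [Fintype ι] (r : KK ι) (f : (ι → ℤ) → ℚ) : Prop :=
  ∃ q : (ι → ℤ) →₀ ℚ, q ≠ 0 ∧ ∃ g : (ι → ℤ) →₀ ℚ,
    (∀ a, g a = ∑ b ∈ q.support, q b * f (a - b)) ∧
    r * (∑ b ∈ q.support, (q b : KK ι) * tmon ι b)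
      = ∑ a ∈ g.support, (g a : KK ι) * tmon ι a

/-- Field of rational functions in x_1, ..., x_n. -/
abbrev Kx (n : ℕ) := FractionRing (MvPolynomial (Fin n) ℚ)

/-- The variable x_i. -/
noncomputable def xv (n : ℕ) (i : Fin n) : Kx n :=
  algebraMap (MvPolynomial (Fin n) ℚ) (Kx n) (MvPolynomial.X i)

/-- The substitution underlying F: t_{0,j} ↦ x_1 and t_{i,j} ↦ x_i⁻¹ x_{i+1} for i ≥ 1
(1-based x's; in our 0-based indexing t_{i,·} ↦ x_{i-1}⁻¹ · x_i for i ≥ 1, t_{0,·} ↦ x_0). -/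
noncomputable def xsub (n : ℕ) (p : GTIdx n) : Kx n :=
  if (p.1 : ℕ) = 0 then xv n p.1
  else (xv n (⟨(p.1 : ℕ) - 1, Nat.lt_of_le_of_lt (Nat.sub_le _ _) p.1.isLt⟩ : Fin n))⁻¹ * xv n p.1

/-- The specialization F on Laurent polynomials, as a ring homomorphism. -/
noncomputable def phiF (n : ℕ) : MvPolynomial (GTIdx n) ℚ →+* Kx n :=
  MvPolynomial.eval₂Hom (Rat.castHom (Kx n)) (xsub n)

/-- `FSpec n r y` : the specialization F of the rational function r (in the t-variables)
is defined and equal to y; i.e. r = p/q with F(q) ≠ 0 and y = F(p)/F(q). -/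
noncomputable def FSpec (n : ℕ) (r : KK (GTIdx n)) (y : Kx n) : Prop :=
  ∃ p q : MvPolynomial (GTIdx n) ℚ, phiF n q ≠ 0 ∧
    r * algebraMap (MvPolynomial (GTIdx n) ℚ) (KK (GTIdx n)) q
      = algebraMap (MvPolynomial (GTIdx n) ℚ) (KK (GTIdx n)) p ∧
    y * phiF n q = phiF n p

/-- The monomial e^μ = x^μ for an integral weight μ. -/
noncomputable def emon {n : ℕ} (mu : Fin n → ℤ) : Kx n := ∏ i, xv n i ^ mu i

/-- ρ = (n-1, n-2, ..., 0). -/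
def rhoW (n : ℕ) (i : Fin n) : ℤ := (n : ℤ) - 1 - (i : ℤ)

/-- The Schur (Laurent) polynomial of λ, defined by Weyl's character formula
(bialternant form). -/
noncomputable def schur (n : ℕ) (lam : Fin n → ℤ) : Kx n :=
  (∑ w : Equiv.Perm (Fin n), ((Equiv.Perm.sign w : ℤ) : Kx n)
      * ∏ i, xv n i ^ (lam (w⁻¹ i) + rhoW n (w⁻¹ i)))
  / (∑ w : Equiv.Perm (Fin n), ((Equiv.Perm.sign w : ℤ) : Kx n)
      * ∏ i, xv n i ^ (rhoW n (w⁻¹ i)))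

/-- The summand w(e^λ / Π_{i<j} (1 - x_j/x_i)) of Weyl's character formula. -/
noncomputable def weylTerm (n : ℕ) (lam : Fin n → ℤ) (w : Equiv.Perm (Fin n)) : Kx n :=
  (∏ i, xv n (w i) ^ lam i)
    / ∏ p ∈ Finset.univ.filter (fun p : Fin n × Fin n => p.1 < p.2),
        (1 - xv n (w p.2) / xv n (w p.1))

/-- Integer version of the edge-direction pattern. -/
def simpDirZ (n : ℕ) (a b : ℕ) (c : ℤ) (ε : GTIdx n → ℤ) : Prop :=
  (∀ p : GTIdx n, ε p ≠ 0 → GTValid n p ∧ a ≤ (p.1 : ℕ) ∧ (p.1 : ℕ) ≤ b)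
  ∧ (∀ r : ℕ, a ≤ r → r ≤ b → ∃! p : GTIdx n, (p.1 : ℕ) = r ∧ ε p ≠ 0)
  ∧ (∀ p : GTIdx n, ε p ≠ 0 → ε p = c)

/-- F(t^u): the specialization of the Laurent monomial t^u. -/
noncomputable def Fmon (n : ℕ) (u : GTIdx n → ℤ) : Kx n := ∏ p, xsub n p ^ u p

/-- A rational polytope in ℝ^m: a bounded set cut out by finitely many integral
linear inequalities. -/
def IsRatPolytope (m : ℕ) (P : Set (Fin m → ℝ)) : Prop :=
  Bornology.IsBounded P ∧ ∃ (k : ℕ) (a : Fin k → Fin m → ℤ) (b : Fin k → ℤ),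
    P = {x | ∀ i, ∑ j, (a i j : ℝ) * x j ≤ (b i : ℝ)}

/-- A rational polyhedron in ℝ^m. -/
def IsRatPolyhedron (m : ℕ) (P : Set (Fin m → ℝ)) : Prop :=
  ∃ (k : ℕ) (a : Fin k → Fin m → ℤ) (b : Fin k → ℤ),
    P = {x | ∀ i, ∑ j, (a i j : ℝ) * x j ≤ (b i : ℝ)}

/-- The cone C_Δ attached to a connected component Δ = c of the equality graph Γ_v:
vectors supported on the nodes of Δ, vanishing at the top (row-0) node of Δ, and
satisfying the interlacing inequalities along the edges of Δ. -/
noncomputable def compCone (n : ℕ) (A : GTIdx n → ℝ) (c : (Gamma n A).ConnectedComponent) :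
    Set (GTIdx n → ℝ) :=
  {x | (∀ p : GTIdx n,
          (¬ ∃ hp : GTValid n p, (Gamma n A).connectedComponentMk ⟨p, hp⟩ = c) → x p = 0)
    ∧ (∀ p : GTNode n, (Gamma n A).connectedComponentMk p = c → (p.1.1 : ℕ) = 0 → x p.1 = 0)
    ∧ (∀ p q : GTNode n, (Gamma n A).connectedComponentMk p = c →
        upEdge n p.1 q.1 → A p.1 = A q.1 →
        (((q.1.2 : ℕ) = (p.1.2 : ℕ)) → x p.1 ≤ x q.1) ∧
        (((q.1.2 : ℕ) = (p.1.2 : ℕ) + 1) → x q.1 ≤ x p.1))}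

/-!
Write `a_μ(y) = det (y_i ^ (μ_j + m - 1 - j))` for the alternant in `m` variables, so that
`s_λ = a_λ(x) / a_0(x)`. The heart of the proof is the branching rule
  `a_μ(x, y) = ∏ i, (x - y_i) * ∑ ν, x ^ (|μ| - |ν|) * a_ν(y)`,
where `ν` runs over the rows interlacing `μ` (`μ_{j+1} ≤ ν_j ≤ μ_j`). By multilinearity the sum
over `ν` is a single determinant whose `(j, i)` entry is a geometric sum over `[μ_{j+1}, μ_j]`;
multiplying column `i` by `x - y_i` telescopes it into a difference of two consecutive rows of
`((y_i / x) ^ (μ_c + m - c))_c`, and expanding that determinant reproduces the Laplace expansion of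
`a_μ(x, y)` along the variable `x`. Iterating the rule removes one row of a Gelfand–Tsetlin pattern
at a time: `a_μ(x_k, …, x_{n-1}) = a_0(x_k, …, x_{n-1}) * ∑ x^(weight)` over the patterns on rows
`k, …, n - 1` with top row `μ`, and the case `μ = 0` shows that `a_0` is a nonzero Vandermonde
product.
-/

open Finset Matrix

lemma prod_zpow_eq_zpow_sum {G₀ ι : Type*} [CommGroupWithZero G₀] {x : G₀} (hx : x ≠ 0)
    (s : Finset ι) (f : ι → ℤ) : ∏ i ∈ s, x ^ f i = x ^ ∑ i ∈ s, f i := by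
  classical
  induction s using Finset.induction with
  | empty => simp
  | insert a s ha ih => rw [prod_insert ha, sum_insert ha, zpow_add₀ hx, ih]

lemma sum_Icc_sub_add_one {M : Type*} [AddCommGroup M] (g : ℤ → M) {a b : ℤ} (hab : a ≤ b + 1) :
    ∑ t ∈ Icc a b, (g t - g (t + 1)) = g a - g (b + 1) := by
  obtain ⟨c, hc, rfl⟩ : ∃ c, a ≤ c ∧ b = c - 1 := ⟨b + 1, hab, by ring⟩
  clear hab
  rw [sub_add_cancel]
  induction c, hc using Int.leInduction with
  | base => simp
  | succ c hc ih =>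
    have hI : Icc a c = insert c (Icc a (c - 1)) := by
      simpa using (insert_Icc_right_eq_Icc_add_one (a := a) (b := c - 1) (by omega)).symm
    rw [add_sub_cancel_right, hI, sum_insert (by simp), ih]
    abel

lemma sub_mul_sum_Icc_zpow {K : Type*} [Field K] {x y : K} (hx : x ≠ 0) (hy : y ≠ 0)
    {a b : ℤ} (e : ℤ) (hab : a ≤ b + 1) :
    (x - y) * ∑ t ∈ Icc a b, x ^ (-t) * y ^ (t + e)
      = x ^ (e + 1) * ((y / x) ^ (a + e) - (y / x) ^ (b + 1 + e)) := by
  have step : ∀ t : ℤ, (x - y) * (x ^ (-t) * y ^ (t + e))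
      = x ^ (e + 1) * (y / x) ^ (t + e) - x ^ (e + 1) * (y / x) ^ (t + 1 + e) := by
    intro t
    rw [div_zpow, div_zpow, show t + 1 + e = (t + e) + 1 by ring, zpow_add_one₀ hx,
      zpow_add_one₀ hx, show -t = e - (t + e) by ring, zpow_sub₀ hx]
    field_simp
    rw [zpow_add_one₀ hy]
    ring
  rw [mul_sum, sum_congr rfl fun t _ => step t, sum_Icc_sub_add_one _ hab, mul_sub]

lemma det_succ_sub_castSucc {R : Type*} [CommRing R] {m : ℕ} (u : Fin (m + 1) → Fin m → R) :
    (of fun j i => u j.succ i - u j.castSucc i).det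
      = ∑ c : Fin (m + 1), (-1) ^ (c : ℕ) * (of fun j i => u (c.succAbove j) i).det := by
  -- Both sides are the determinant of the matrix with rows `(1, u c)`: the right side by expanding
  -- along the first column, the left side after subtracting each row from the next one.
  let A : Matrix (Fin (m + 1)) (Fin (m + 1)) R := of fun c => Fin.cons 1 (u c)
  let B : Matrix (Fin (m + 1)) (Fin (m + 1)) R := of fun c => Fin.cases (Fin.cons 1 (u 0))
    (fun j => Fin.cons 0 (u j.succ - u j.castSucc)) c
  have hAB : A.det = B.det := det_eq_of_forall_row_eq_smul_add_pred (fun _ => 1)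
    (fun i => rfl) (fun j i => by cases i using Fin.cases <;> simp [A, B])
  rw [det_succ_column_zero] at hAB
  conv_rhs at hAB => rw [det_succ_column_zero, Fin.sum_univ_succ]
  simpa [A, B, Matrix.submatrix] using hAB.symm

def extendByZero (m : ℕ) (ν : Fin m → ℤ) : ℕ → ℤ := fun j => if h : j < m then ν ⟨j, h⟩ else 0

@[simp]
lemma extendByZero_coe (m : ℕ) (ν : Fin m → ℤ) (j : Fin m) : extendByZero m ν j = ν j := by
  simp [extendByZero]

@[simp]
lemma extendByZero_zero (m : ℕ) : extendByZero m 0 = 0 := by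
  funext j
  simp [extendByZero]

noncomputable def interlacing (μ : ℕ → ℤ) (m : ℕ) : Finset (Fin m → ℤ) :=
  Fintype.piFinset fun j => Icc (μ (j + 1)) (μ j)

lemma mem_interlacing {μ : ℕ → ℤ} {m : ℕ} {ν : Fin m → ℤ} :
    ν ∈ interlacing μ m ↔ ∀ j : Fin m, μ (j + 1) ≤ ν j ∧ ν j ≤ μ j := by
  simp [interlacing]

lemma interlacing_zero (m : ℕ) : interlacing 0 m = {0} := by
  simpa [interlacing] using Fintype.piFinset_singleton (0 : Fin m → ℤ)

lemma extendByZero_succ_le_of_mem_interlacing {μ : ℕ → ℤ} {m : ℕ} {ν : Fin m → ℤ}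
    (hν : ν ∈ interlacing μ m) {j : ℕ} (hj : j + 1 < m) :
    extendByZero m ν (j + 1) ≤ extendByZero m ν j := by
  simp only [extendByZero, dif_pos hj, dif_pos (show j < m by omega)]
  exact (mem_interlacing.mp hν ⟨j + 1, hj⟩).2.trans (mem_interlacing.mp hν ⟨j, by omega⟩).1

lemma sum_succAbove_exponent {m : ℕ} (μ : ℕ → ℤ) (c : Fin (m + 1)) :
    ∑ j : Fin m, (μ (c.succAbove j) + ((m : ℤ) - c.succAbove j))
      = ∑ c' : Fin (m + 1), μ c' + ∑ j : Fin m, ((m : ℤ) - j) - (μ c + ((m : ℤ) - c)) := by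
  have h := Fin.sum_univ_succAbove (fun c' : Fin (m + 1) => μ c' + ((m : ℤ) - c')) c
  rw [sum_add_distrib, Fin.sum_univ_castSucc (fun c' : Fin (m + 1) => (m : ℤ) - c')] at h
  simp only [Fin.val_castSucc, Fin.val_last, sub_self, add_zero] at h
  linarith

section Alternant

variable {K : Type*} [Field K]

noncomputable def alternant {m : ℕ} (y : Fin m → K) (μ : ℕ → ℤ) : K :=
  (of fun j i : Fin m => y i ^ (μ j + ((m : ℤ) - 1 - j))).det

lemma alternant_cons_eq_sum {m : ℕ} (x : K) (y : Fin m → K) (μ : ℕ → ℤ) :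
    alternant (Fin.cons x y : Fin (m + 1) → K) μ = ∑ c : Fin (m + 1),
      (-1) ^ (c : ℕ) * x ^ (μ c + ((m : ℤ) - c)) *
        (of fun j i : Fin m => y i ^ (μ (c.succAbove j) + ((m : ℤ) - c.succAbove j))).det := by
  rw [alternant, det_succ_column_zero]
  refine sum_congr rfl fun c _ => ?_
  congr 3
  · simp only [of_apply, Fin.cons_zero]
    congr 1
    push_cast
    ring
  · ext j i
    simp only [submatrix_apply, of_apply, Fin.cons_succ]
    push_cast
    ring_nf

lemma sum_interlacing_alternant {m : ℕ} {x : K} (hx : x ≠ 0) (y : Fin m → K) (μ : ℕ → ℤ) :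
    ∑ ν ∈ interlacing μ m, x ^ (-∑ j, ν j) * alternant y (extendByZero m ν)
      = (of fun j i : Fin m => ∑ t ∈ Icc (μ (j + 1)) (μ j),
          x ^ (-t) * y i ^ (t + ((m : ℤ) - 1 - j))).det := by
  classical
  have hrows := (detRowAlternating : (Fin m → K) [⋀^Fin m]→ₗ[K] K).toMultilinearMap.map_sum_finset
    (fun j t i => x ^ (-t) * y i ^ (t + ((m : ℤ) - 1 - j))) (fun j => Icc (μ (j + 1)) (μ j))
  refine Eq.trans ?_ (Eq.trans hrows.symm ?_)
  · refine sum_congr rfl fun ν _ => ?_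
    rw [← sum_neg_distrib, ← prod_zpow_eq_zpow_sum hx, alternant, ← det_mul_column]
    simp only [extendByZero_coe, of_apply]
    rfl
  · change detRowAlternating _ = detRowAlternating _
    congr 1
    ext j i
    simp [Finset.sum_apply]

lemma det_sum_Icc_mul_prod_sub {m : ℕ} {x : K} (hx : x ≠ 0) {y : Fin m → K} (hy : ∀ i, y i ≠ 0)
    {μ : ℕ → ℤ} (hμ : ∀ j < m, μ (j + 1) ≤ μ j) :
    (of fun j i : Fin m => ∑ t ∈ Icc (μ (j + 1)) (μ j),
        x ^ (-t) * y i ^ (t + ((m : ℤ) - 1 - j))).det * ∏ i, (x - y i)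
      = (∏ j : Fin m, x ^ ((m : ℤ) - j)) * ∑ c : Fin (m + 1), (-1) ^ (c : ℕ) *
          (of fun j i : Fin m =>
            (y i / x) ^ (μ (c.succAbove j) + ((m : ℤ) - c.succAbove j))).det := by
  rw [mul_comm, ← det_mul_row, ← det_succ_sub_castSucc
    (fun c i => (y i / x) ^ (μ c + ((m : ℤ) - c))), ← det_mul_column]
  congr 1
  ext j i
  simp only [of_apply]
  rw [sub_mul_sum_Icc_zpow hx (hy i) _ (by linarith [hμ j j.isLt])]
  simp only [Fin.val_succ, Fin.val_castSucc]
  push_cast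
  ring_nf

lemma det_div_zpow {m : ℕ} {x : K} (hx : x ≠ 0) (y : Fin m → K) (f : Fin m → ℤ) :
    (of fun j i : Fin m => (y i / x) ^ f j).det
      = x ^ (-∑ j, f j) * (of fun j i => y i ^ f j).det := by
  rw [← sum_neg_distrib, ← prod_zpow_eq_zpow_sum hx, ← det_mul_column]
  congr 1
  ext j i
  simp only [of_apply, _root_.zpow_neg, mul_zpow, _root_.inv_zpow, div_eq_inv_mul]

theorem alternant_cons {m : ℕ} {x : K} (hx : x ≠ 0) {y : Fin m → K} (hy : ∀ i, y i ≠ 0)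
    {μ : ℕ → ℤ} (hμ : ∀ j < m, μ (j + 1) ≤ μ j) :
    alternant (Fin.cons x y : Fin (m + 1) → K) μ
      = (∑ ν ∈ interlacing μ m,
          x ^ (∑ c : Fin (m + 1), μ c - ∑ j, ν j) * alternant y (extendByZero m ν))
        * ∏ i, (x - y i) := by
  have hS : ∑ ν ∈ interlacing μ m,
        x ^ (∑ c : Fin (m + 1), μ c - ∑ j, ν j) * alternant y (extendByZero m ν)
      = x ^ (∑ c : Fin (m + 1), μ c) *
          ∑ ν ∈ interlacing μ m, x ^ (-∑ j, ν j) * alternant y (extendByZero m ν) := by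
    rw [mul_sum]
    refine sum_congr rfl fun ν _ => ?_
    rw [sub_eq_add_neg, zpow_add₀ hx, mul_assoc]
  rw [hS, sum_interlacing_alternant hx, mul_assoc, det_sum_Icc_mul_prod_sub hx hy hμ,
    alternant_cons_eq_sum, prod_zpow_eq_zpow_sum hx, mul_sum, mul_sum]
  refine sum_congr rfl fun c _ => ?_
  rw [det_div_zpow hx, sum_succAbove_exponent]
  generalize ∑ c : Fin (m + 1), μ c = S
  generalize ∑ j : Fin m, ((m : ℤ) - j) = T
  generalize μ c + ((m : ℤ) - c) = e
  rw [show x ^ e = x ^ S * x ^ T * x ^ (-(S + T - e)) by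
    rw [← zpow_add₀ hx, ← zpow_add₀ hx]; ring_nf]
  ring

lemma alternant_cons_zero {m : ℕ} {x : K} (hx : x ≠ 0) {y : Fin m → K} (hy : ∀ i, y i ≠ 0) :
    alternant (Fin.cons x y : Fin (m + 1) → K) 0 = alternant y 0 * ∏ i, (x - y i) := by
  rw [alternant_cons hx hy fun _ _ => le_rfl, interlacing_zero, sum_singleton]
  simp

lemma alternant_zero_ne_zero {m : ℕ} {y : Fin m → K} (hinj : Function.Injective y)
    (hy : ∀ i, y i ≠ 0) : alternant y 0 ≠ 0 := by
  induction m with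
  | zero => simp [alternant]
  | succ m ih =>
    rw [← Fin.cons_self_tail y, alternant_cons_zero (hy 0) (y := Fin.tail y) fun i => hy i.succ]
    refine mul_ne_zero (ih (hinj.comp (Fin.succ_injective _)) fun i => hy i.succ) ?_
    exact prod_ne_zero_iff.mpr fun i _ => sub_ne_zero.mpr (hinj.ne (Fin.succ_ne_zero i).symm)

end Alternant

-- `1` past the last variable, so that variables can be indexed by natural numbers.
noncomputable def xAt (n k : ℕ) : Kx n := if h : k < n then xv n ⟨k, h⟩ else 1

lemma xv_ne_zero (n : ℕ) (i : Fin n) : xv n i ≠ 0 :=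
  (map_ne_zero_iff _ (IsFractionRing.injective _ _)).mpr (MvPolynomial.X_ne_zero i)

lemma xv_injective (n : ℕ) : Function.Injective (xv n) :=
  fun _ _ h => MvPolynomial.X_injective (IsFractionRing.injective _ _ h)

lemma xAt_ne_zero (n k : ℕ) : xAt n k ≠ 0 := by
  unfold xAt
  split
  · exact xv_ne_zero n _
  · exact one_ne_zero

noncomputable def varsFrom (n k m : ℕ) : Fin m → Kx n := fun i => xAt n (k + i)

lemma varsFrom_succ (n k m : ℕ) :
    varsFrom n k (m + 1) = Fin.cons (xAt n k) (varsFrom n (k + 1) m) := by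
  funext i
  cases i using Fin.cases with
  | zero => simp [varsFrom]
  | succ i => simp [varsFrom, add_assoc, add_comm 1]

lemma varsFrom_zero_self (n : ℕ) : varsFrom n 0 n = xv n := by
  funext i
  simp [varsFrom, xAt]

section Patterns

variable {n : ℕ}

def rowSum (A : GTIdx n → ℤ) (i : ℕ) : ℤ := ∑ j ∈ range n, entryZ A i j

noncomputable def weightFrom (k : ℕ) (A : GTIdx n → ℤ) : Kx n :=
  ∏ i ∈ Ico k n, xAt n i ^ (rowSum A i - rowSum A (i + 1))

def patternsFrom (n k : ℕ) (μ : ℕ → ℤ) : Set (GTIdx n → ℤ) :=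
  {A | (∀ j : ℕ, j < n - k → entryZ A k j = μ j)
    ∧ (∀ i j : ℕ, k ≤ i → i + 1 + j < n →
        entryZ A (i + 1) j ≤ entryZ A i j ∧ entryZ A i (j + 1) ≤ entryZ A (i + 1) j)
    ∧ (∀ p : GTIdx n, ((p.1 : ℕ) < k ∨ ¬ GTValid n p) → A p = 0)}

lemma entryZ_of_lt {A : GTIdx n → ℤ} {i j : ℕ} (hi : i < n) (hj : j < n) :
    entryZ A i j = A (⟨i, hi⟩, ⟨j, hj⟩) := by
  rw [entryZ, dif_pos ⟨hi, hj⟩]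

lemma entryZ_eq_zero_of_mem_patternsFrom {k : ℕ} {μ : ℕ → ℤ} {A : GTIdx n → ℤ}
    (hA : A ∈ patternsFrom n k μ) {i j : ℕ} (h : i < k ∨ n ≤ i + j) : entryZ A i j = 0 := by
  by_cases hin : i < n ∧ j < n
  · rw [entryZ_of_lt hin.1 hin.2]
    refine hA.2.2 _ ?_
    rcases h with h | h
    · exact Or.inl h
    · exact Or.inr fun hv => by unfold GTValid at hv; simp only at hv; omega
  · rw [entryZ, dif_neg hin]

lemma rowSum_of_mem_patternsFrom {k m : ℕ} (hk : k + m = n) {μ : ℕ → ℤ} {A : GTIdx n → ℤ}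
    (hA : A ∈ patternsFrom n k μ) : rowSum A k = ∑ j ∈ range m, μ j := by
  unfold rowSum
  rw [← sum_subset (range_subset_range.mpr (show m ≤ n by omega)) fun j _ hj =>
    entryZ_eq_zero_of_mem_patternsFrom hA (Or.inr (by simp only [mem_range] at hj; omega))]
  exact sum_congr rfl fun j hj => hA.1 j (by simp only [mem_range] at hj; omega)

noncomputable def insertRow (k : ℕ) (μ : ℕ → ℤ) (B : GTIdx n → ℤ) : GTIdx n → ℤ :=
  fun p => if (p.1 : ℕ) = k ∧ GTValid n p then μ p.2 else B p

noncomputable def eraseRow (k : ℕ) (A : GTIdx n → ℤ) : GTIdx n → ℤ :=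
  fun p => if (p.1 : ℕ) = k then 0 else A p

lemma entryZ_insertRow (k : ℕ) (μ : ℕ → ℤ) (B : GTIdx n → ℤ) (i j : ℕ) :
    entryZ (insertRow k μ B) i j = if i = k ∧ i + j < n then μ j else entryZ B i j := by
  unfold entryZ insertRow GTValid
  split_ifs <;> simp_all; omega

lemma entryZ_eraseRow (k : ℕ) (A : GTIdx n → ℤ) (i j : ℕ) :
    entryZ (eraseRow k A) i j = if i = k then 0 else entryZ A i j := by
  unfold entryZ eraseRow
  split_ifs <;> simp_all

lemma insertRow_mem {k m : ℕ} (hk : k + (m + 1) = n) {μ : ℕ → ℤ} {ν : Fin m → ℤ}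
    (hν : ν ∈ interlacing μ m) {B : GTIdx n → ℤ}
    (hB : B ∈ patternsFrom n (k + 1) (extendByZero m ν)) :
    insertRow k μ B ∈ patternsFrom n k μ := by
  refine ⟨fun j hj => ?_, fun i j hki hij => ?_, fun p hp => ?_⟩
  · rw [entryZ_insertRow, if_pos ⟨rfl, by omega⟩]
  · simp only [entryZ_insertRow]
    rcases eq_or_lt_of_le hki with rfl | hki
    · have hjm : j < m := by omega
      have hνj := mem_interlacing.mp hν ⟨j, hjm⟩
      rw [if_neg (by omega), if_pos ⟨rfl, by omega⟩, if_pos ⟨rfl, by omega⟩,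
        hB.1 j (by omega), extendByZero, dif_pos hjm]
      exact hνj.symm
    · rw [if_neg (by omega), if_neg (by omega), if_neg (by omega)]
      exact hB.2.1 i j hki hij
  · unfold insertRow
    rw [if_neg fun h => by rcases hp with hp | hp <;> [omega; exact hp h.2]]
    exact hB.2.2 p (hp.imp_left fun hp => by omega)

lemma eraseRow_mem {k m : ℕ} (hk : k + (m + 1) = n) {μ : ℕ → ℤ} {A : GTIdx n → ℤ}
    (hA : A ∈ patternsFrom n k μ) :
    eraseRow k A ∈ patternsFrom n (k + 1) (extendByZero m fun j => entryZ A (k + 1) j) := by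
  refine ⟨fun j hj => ?_, fun i j hki hij => ?_, fun p hp => ?_⟩
  · rw [entryZ_eraseRow, if_neg (by omega), extendByZero, dif_pos (by omega)]
  · simp only [entryZ_eraseRow, if_neg (show i + 1 ≠ k by omega), if_neg (show i ≠ k by omega)]
    exact hA.2.1 i j (by omega) hij
  · unfold eraseRow
    split_ifs with hpk
    · rfl
    · exact hA.2.2 p (hp.imp_left fun hp => by omega)

lemma insertRow_eraseRow {k : ℕ} {μ : ℕ → ℤ} {A : GTIdx n → ℤ} (hA : A ∈ patternsFrom n k μ) :
    insertRow k μ (eraseRow k A) = A := by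
  funext p
  unfold insertRow eraseRow
  split_ifs with hv hpk
  · have := hA.1 p.2 (by unfold GTValid at hv; omega)
    rw [entryZ_of_lt (by omega) p.2.isLt] at this
    rw [← this]
    congr
    exact hv.1.symm
  · exact (hA.2.2 p (Or.inr fun h => hv ⟨hpk, h⟩)).symm
  · rfl

lemma eraseRow_insertRow {k k' : ℕ} (hk : k < k') (μ ν : ℕ → ℤ) {B : GTIdx n → ℤ}
    (hB : B ∈ patternsFrom n k' ν) : eraseRow k (insertRow k μ B) = B := by
  funext p
  unfold eraseRow insertRow
  split_ifs with hpk h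
  · exact (hB.2.2 p (Or.inl (by omega))).symm
  · exact absurd h.1 hpk
  · rfl

lemma patternsFrom_self (μ : ℕ → ℤ) : patternsFrom n n μ = {0} := by
  ext A
  refine ⟨fun hA => funext fun p => hA.2.2 p (Or.inl p.1.isLt), ?_⟩
  rintro rfl
  exact ⟨fun j hj => by omega, fun i j hi hij => by omega, fun p _ => rfl⟩

lemma patternsFrom_eq_biUnion {k m : ℕ} (hk : k + (m + 1) = n) (μ : ℕ → ℤ) :
    patternsFrom n k μ = ⋃ ν ∈ (interlacing μ m : Set (Fin m → ℤ)),
      insertRow k μ '' patternsFrom n (k + 1) (extendByZero m ν) := by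
  ext A
  simp only [Set.mem_iUnion, Set.mem_image, mem_coe, exists_prop]
  refine ⟨fun hA => ⟨fun j => entryZ A (k + 1) j, mem_interlacing.mpr fun j => ?_,
    eraseRow k A, eraseRow_mem hk hA, insertRow_eraseRow hA⟩, ?_⟩
  · have h := hA.2.1 k j le_rfl (by omega)
    rw [hA.1 j (by omega), hA.1 (j + 1) (by omega)] at h
    exact h.symm
  · rintro ⟨ν, hν, B, hB, rfl⟩
    exact insertRow_mem hk hν hB

lemma patternsFrom_finite {k m : ℕ} (hk : k + m = n) (μ : ℕ → ℤ) :
    (patternsFrom n k μ).Finite := by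
  induction m generalizing k μ with
  | zero => simp [show k = n by omega, patternsFrom_self]
  | succ m ih =>
    rw [patternsFrom_eq_biUnion hk]
    exact (interlacing μ m).finite_toSet.biUnion fun ν _ => (ih (by omega) _).image _

lemma rowSum_insertRow_of_ne {k i : ℕ} (hi : i ≠ k) (μ : ℕ → ℤ) (B : GTIdx n → ℤ) :
    rowSum (insertRow k μ B) i = rowSum B i :=
  sum_congr rfl fun j _ => by rw [entryZ_insertRow, if_neg fun h => hi h.1]

lemma weightFrom_insertRow {k m : ℕ} (hk : k + (m + 1) = n) {μ : ℕ → ℤ} {ν : Fin m → ℤ}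
    (hν : ν ∈ interlacing μ m) {B : GTIdx n → ℤ}
    (hB : B ∈ patternsFrom n (k + 1) (extendByZero m ν)) :
    weightFrom k (insertRow k μ B)
      = xAt n k ^ (∑ c : Fin (m + 1), μ c - ∑ j, ν j) * weightFrom (k + 1) B := by
  rw [weightFrom, prod_eq_prod_Ico_succ_bot (by omega), weightFrom,
    rowSum_of_mem_patternsFrom hk (insertRow_mem hk hν hB),
    rowSum_insertRow_of_ne (by omega), rowSum_of_mem_patternsFrom (show k + 1 + m = n by omega) hB,
    ← Fin.sum_univ_eq_sum_range, ← Fin.sum_univ_eq_sum_range]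
  simp only [extendByZero_coe]
  congr 1
  refine prod_congr rfl fun i hi => ?_
  rw [mem_Ico] at hi
  rw [rowSum_insertRow_of_ne (by omega), rowSum_insertRow_of_ne (by omega)]

lemma finsum_weightFrom {k m : ℕ} (hk : k + (m + 1) = n) (μ : ℕ → ℤ) :
    ∑ᶠ A ∈ patternsFrom n k μ, weightFrom k A
      = ∑ ν ∈ interlacing μ m, xAt n k ^ (∑ c : Fin (m + 1), μ c - ∑ j, ν j) *
          ∑ᶠ B ∈ patternsFrom n (k + 1) (extendByZero m ν), weightFrom (k + 1) B := by
  have hfin ν := patternsFrom_finite (k := k + 1) (show k + 1 + m = n by omega) (extendByZero m ν)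
  have hinj ν : Set.InjOn (insertRow k μ) (patternsFrom n (k + 1) (extendByZero m ν)) :=
    fun B hB B' hB' h => by
      rw [← eraseRow_insertRow k.lt_succ_self μ _ hB, h, eraseRow_insertRow k.lt_succ_self μ _ hB']
  have hdisj : (interlacing μ m : Set (Fin m → ℤ)).PairwiseDisjoint
      fun ν => insertRow k μ '' patternsFrom n (k + 1) (extendByZero m ν) := by
    intro ν _ ν' _ hne
    refine Set.disjoint_left.mpr ?_
    rintro _ ⟨B, hB, rfl⟩ ⟨B', hB', hBB'⟩
    obtain rfl : B' = B := by
      rw [← eraseRow_insertRow k.lt_succ_self μ _ hB', hBB',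
        eraseRow_insertRow k.lt_succ_self μ _ hB]
    refine hne (funext fun j => ?_)
    rw [← extendByZero_coe m ν, ← extendByZero_coe m ν', ← hB.1 j (by omega), ← hB'.1 j (by omega)]
  rw [patternsFrom_eq_biUnion hk, finsum_mem_biUnion hdisj (interlacing μ m).finite_toSet
    fun ν _ => (hfin ν).image _, finsum_mem_coe_finset]
  refine sum_congr rfl fun ν hν => ?_
  rw [finsum_mem_image (hinj ν), finsum_mem_congr rfl fun B hB => weightFrom_insertRow hk hν hB,
    ← (hfin ν).coe_toFinset, finsum_mem_coe_finset, finsum_mem_coe_finset, mul_sum]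

theorem alternant_varsFrom {k m : ℕ} (hk : k + m = n) {μ : ℕ → ℤ}
    (hμ : ∀ j, j + 1 < m → μ (j + 1) ≤ μ j) :
    alternant (varsFrom n k m) μ
      = alternant (varsFrom n k m) 0 * ∑ᶠ A ∈ patternsFrom n k μ, weightFrom k A := by
  induction m generalizing k μ with
  | zero =>
    obtain rfl : k = n := by omega
    simp [alternant, patternsFrom_self, weightFrom]
  | succ m ih =>
    have hx := xAt_ne_zero n k
    have hy : ∀ i, varsFrom n (k + 1) m i ≠ 0 := fun i => xAt_ne_zero n _
    rw [varsFrom_succ, alternant_cons hx hy fun j hj => hμ j (by omega),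
      alternant_cons_zero hx hy, finsum_weightFrom hk, mul_sum, sum_mul]
    refine sum_congr rfl fun ν hν => ?_
    rw [ih (by omega) fun j hj => extendByZero_succ_le_of_mem_interlacing hν hj]
    ring

end Patterns

lemma sum_sign_mul_prod_eq_alternant {n : ℕ} (g : Fin n → ℤ) :
    ∑ w : Equiv.Perm (Fin n), ((Equiv.Perm.sign w : ℤ) : Kx n)
        * ∏ i, xv n i ^ (g (w⁻¹ i) + rhoW n (w⁻¹ i))
      = alternant (varsFrom n 0 n) (extendByZero n g) := by
  rw [alternant, det_apply', ← Equiv.sum_comp (Equiv.inv (Equiv.Perm (Fin n)))]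
  refine sum_congr rfl fun w _ => ?_
  simp [varsFrom_zero_self, rhoW]

lemma GTPat_eq_patternsFrom {n : ℕ} (lam : Fin n → ℤ) :
    GTPat n lam = patternsFrom n 0 (extendByZero n lam) := by
  ext A
  refine ⟨fun ⟨htop, hint, hzero⟩ => ⟨fun j hj => ?_, fun i j _ => hint i j,
    fun p hp => hzero p (hp.resolve_left (Nat.not_lt_zero _))⟩,
    fun ⟨htop, hint, hzero⟩ => ⟨fun j => ?_, fun i j => hint i j (Nat.zero_le i),
    fun p hp => hzero p (Or.inr hp)⟩⟩
  · simpa [extendByZero, show j < n by omega] using htop ⟨j, by omega⟩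
  · simpa using htop j (by omega)

lemma emon_wtZ {n : ℕ} (A : GTIdx n → ℤ) : emon (wtZ A) = weightFrom 0 A := by
  rw [emon, weightFrom, ← range_eq_Ico, ← Fin.prod_univ_eq_prod_range]
  refine prod_congr rfl fun i _ => ?_
  simp [xAt, wtZ, rowSum, Fin.sum_univ_eq_sum_range (entryZ A _)]

/-- the Schur polynomial is the sum over Gelfand–Tsetlin patterns with top
row λ of the monomials x^{μ_A}. -/
theorem statement0 (n : ℕ) (lam : Fin n → ℤ)
    (hlam : ∀ i j : Fin n, i ≤ j → lam j ≤ lam i) :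
    schur n lam = ∑ᶠ A ∈ GTPat n lam, emon (wtZ A) := by
  have hdec : ∀ j, j + 1 < n → extendByZero n lam (j + 1) ≤ extendByZero n lam j :=
    fun j hj => by
      simpa [extendByZero, hj, show j < n by omega] using
        hlam ⟨j, by omega⟩ ⟨j + 1, hj⟩ (Fin.mk_le_mk.mpr j.le_succ)
  have hden : alternant (varsFrom n 0 n) 0 ≠ 0 := by
    rw [varsFrom_zero_self]
    exact alternant_zero_ne_zero (xv_injective n) (xv_ne_zero n)
  have hrho := sum_sign_mul_prod_eq_alternant (0 : Fin n → ℤ)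
  simp only [Pi.zero_apply, zero_add, extendByZero_zero] at hrho
  rw [schur, sum_sign_mul_prod_eq_alternant, hrho, alternant_varsFrom (zero_add n) hdec,
    mul_div_cancel_left₀ _ hden, GTPat_eq_patternsFrom]
  exact finsum_mem_congr rfl fun A _ => (emon_wtZ A).symm
end

section
/- A point A of the Gelfand–Tsetlin polytope GT_λ is a vertex if and only if for every 1 ≤ i ≤ n−1 and 1 ≤ j ≤ n−i, the entry A_{i,j} equals at least one of its upper neighbors A_{i−1,j} or A_{i−1,j+1}. -/
open scoped BigOperators Classical

/-!
Going down the rows, an entry that equals one of its upper neighbours is pinned by the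
interlacing inequality on that side, so at a point satisfying the condition every segment
through it in the polytope is constant. Conversely, if `A (i+1, j)` lies strictly between its
upper neighbours, the positions in rows `≥ i+1` carrying the same value form a block that is
joined to the rest of the pattern by strict inequalities only (rows are weakly decreasing,
so no other entry of row `i+1` has this value), and moving the block up and down by a small
amount exhibits `A` as a midpoint.
-/

lemma entryR_of_lt {n : ℕ} (A : GTIdx n → ℝ) {i j : ℕ} (hi : i < n) (hj : j < n) :
    entryR A i j = A (⟨i, hi⟩, ⟨j, hj⟩) :=
  dif_pos ⟨hi, hj⟩

lemma entryR_mem_range {n : ℕ} (A : GTIdx n → ℝ) {i j : ℕ} (hi : i < n) (hj : j < n) :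
    entryR A i j ∈ Set.range A :=
  ⟨_, (entryR_of_lt A hi hj).symm⟩

lemma entryR_mem_openSegment {n : ℕ} {x y A : GTIdx n → ℝ} (h : A ∈ openSegment ℝ x y)
    (i j : ℕ) : entryR A i j ∈ openSegment ℝ (entryR x i j) (entryR y i j) := by
  obtain ⟨a, b, ha, hb, hab, rfl⟩ := h
  refine ⟨a, b, ha, hb, hab, ?_⟩
  unfold entryR
  split_ifs <;> simp

lemma eq_of_mem_openSegment_of_le {u w c : ℝ} (h : c ∈ openSegment ℝ u w)
    (hu : u ≤ c) (hw : w ≤ c) : u = c ∧ w = c := by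
  obtain ⟨a, b, ha, hb, hab, rfl⟩ := h
  simp only [smul_eq_mul] at *
  have hwu : b * (u - w) ≤ 0 := by linear_combination hu + u * hab
  have huw : a * (w - u) ≤ 0 := by linear_combination hw + w * hab
  obtain rfl : u = w := le_antisymm (by nlinarith) (by nlinarith)
  constructor <;> linear_combination -u * hab

lemma eq_of_mem_openSegment_of_ge {u w c : ℝ} (h : c ∈ openSegment ℝ u w)
    (hu : c ≤ u) (hw : c ≤ w) : u = c ∧ w = c := by
  obtain ⟨a, b, ha, hb, hab, rfl⟩ := h
  simp only [smul_eq_mul] at *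
  have hwu : b * (w - u) ≤ 0 := by linear_combination hu - u * hab
  have huw : a * (u - w) ≤ 0 := by linear_combination hw - w * hab
  obtain rfl : u = w := le_antisymm (by nlinarith) (by nlinarith)
  constructor <;> linear_combination -u * hab

lemma Set.Finite.exists_pos_le_sub_of_lt {S : Set ℝ} (hS : S.Finite) :
    ∃ t > 0, ∀ a ∈ S, ∀ b ∈ S, a < b → t ≤ b - a := by
  set gaps := insert 1 {d | ∃ a ∈ S, ∃ b ∈ S, a < b ∧ d = b - a}
  have hfin : gaps.Finite :=
    ((hS.prod hS).image fun ab : ℝ × ℝ => ab.2 - ab.1).subset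
      (by rintro _ ⟨a, ha, b, hb, -, rfl⟩; exact ⟨(a, b), ⟨ha, hb⟩, rfl⟩) |>.insert 1
  obtain ⟨t, ht, hmin⟩ := Set.exists_min_image gaps id hfin ⟨1, Set.mem_insert _ _⟩
  refine ⟨t, ?_, fun a ha b hb hab => hmin _ (Set.mem_insert_of_mem _ ⟨a, ha, b, hb, hab, rfl⟩)⟩
  rcases ht with rfl | ⟨a, -, b, -, hab, rfl⟩
  · exact one_pos
  · exact sub_pos.mpr hab

lemma add_ite_le_add_ite {a b s t : ℝ} {P Q : Prop} [Decidable P] [Decidable Q]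
    (hs : |s| ≤ t) (hab : a ≤ b) (hgap : a < b → t ≤ b - a) (hPQ : a = b → (P ↔ Q)) :
    a + (if P then s else 0) ≤ b + (if Q then s else 0) := by
  rcases hab.lt_or_eq with hlt | rfl
  · have := hgap hlt
    have := abs_le.mp hs
    split_ifs <;> linarith
  · simp only [hPQ rfl, le_refl]

noncomputable def bump {n : ℕ} (A : GTIdx n → ℝ) (D : ℕ → ℕ → Prop) (s : ℝ) : GTIdx n → ℝ :=
  fun p => A p + if D p.1 p.2 then s else 0

lemma entryR_bump {n : ℕ} (A : GTIdx n → ℝ) {D : ℕ → ℕ → Prop}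
    (hD : ∀ i j, D i j → i + j < n) (s : ℝ) (i j : ℕ) :
    entryR (bump A D s) i j = entryR A i j + if D i j then s else 0 := by
  by_cases h : i < n ∧ j < n
  · simp only [entryR_of_lt _ h.1 h.2, bump]
  · simp only [entryR, dif_neg h, if_neg fun hij => h (by have := hD i j hij; omega), add_zero]

lemma mem_openSegment_bump {n : ℕ} (A : GTIdx n → ℝ) (D : ℕ → ℕ → Prop) (s : ℝ) :
    A ∈ openSegment ℝ (bump A D s) (bump A D (-s)) := by
  refine ⟨1 / 2, 1 / 2, by norm_num, by norm_num, by norm_num, funext fun p => ?_⟩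
  simp only [bump, Pi.add_apply, Pi.smul_apply, smul_eq_mul]
  split_ifs <;> ring

namespace GTPoly

variable {n : ℕ} {lam : Fin n → ℝ} {A : GTIdx n → ℝ}

lemma entryR_succ_le (hA : A ∈ GTPoly n lam) {i j : ℕ} (h : i + (j + 1) < n) :
    entryR A i (j + 1) ≤ entryR A i j :=
  (hA.2.1 i j (by omega)).2.trans (hA.2.1 i j (by omega)).1

lemma entryR_le_of_le (hA : A ∈ GTPoly n lam) {i j k : ℕ} (hjk : j ≤ k) (h : i + k < n) :
    entryR A i k ≤ entryR A i j := by
  induction k, hjk using Nat.le_induction with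
  | base => rfl
  | succ k _ ih => exact (entryR_succ_le hA h).trans (ih (by omega))

lemma eq_of_forall_entryR_eq {x : GTIdx n → ℝ} (hA : A ∈ GTPoly n lam)
    (hx : x ∈ GTPoly n lam) (h : ∀ i j, i + j < n → entryR x i j = entryR A i j) : x = A := by
  funext p
  by_cases hp : GTValid n p
  · simpa only [entryR_of_lt _ p.1.isLt p.2.isLt] using h p.1 p.2 hp
  · rw [hx.2.2 p hp, hA.2.2 p hp]

lemma entryR_eq_of_mem_openSegment (hA : A ∈ GTPoly n lam)
    (hup : ∀ i j, i + 1 + j < n →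
      entryR A (i + 1) j = entryR A i j ∨ entryR A (i + 1) j = entryR A i (j + 1))
    {x y : GTIdx n → ℝ} (hx : x ∈ GTPoly n lam) (hy : y ∈ GTPoly n lam)
    (hxy : A ∈ openSegment ℝ x y) :
    ∀ i j, i + j < n → entryR x i j = entryR A i j ∧ entryR y i j = entryR A i j := by
  intro i
  induction i with
  | zero =>
    intro j hj
    rw [hx.1 ⟨j, by omega⟩, hy.1 ⟨j, by omega⟩, hA.1 ⟨j, by omega⟩]
    exact ⟨rfl, rfl⟩
  | succ i ih =>
    intro j hj
    have hseg := entryR_mem_openSegment hxy (i + 1) j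
    rcases hup i j hj with heq | heq
    · obtain ⟨hxi, hyi⟩ := ih j (by omega)
      rw [heq] at hseg ⊢
      exact eq_of_mem_openSegment_of_le hseg (hxi ▸ (hx.2.1 i j hj).1)
        (hyi ▸ (hy.2.1 i j hj).1)
    · obtain ⟨hxi, hyi⟩ := ih (j + 1) (by omega)
      rw [heq] at hseg ⊢
      exact eq_of_mem_openSegment_of_ge hseg (hxi ▸ (hx.2.1 i j hj).2)
        (hyi ▸ (hy.2.1 i j hj).2)

lemma mem_extremePoints_of_eq_upper (hA : A ∈ GTPoly n lam)
    (hup : ∀ i j, i + 1 + j < n →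
      entryR A (i + 1) j = entryR A i j ∨ entryR A (i + 1) j = entryR A i (j + 1)) :
    A ∈ Set.extremePoints ℝ (GTPoly n lam) :=
  ⟨hA, fun _ hx _ hy hxy => eq_of_forall_entryR_eq hA hx fun i j h =>
    (entryR_eq_of_mem_openSegment hA hup hx hy hxy i j h).1⟩

lemma bump_mem (hA : A ∈ GTPoly n lam) {D : ℕ → ℕ → Prop}
    (hD : ∀ i j, D i j → 0 < i ∧ i + j < n)
    (hclosed : ∀ i j k, i + 1 + j < n → (k = j ∨ k = j + 1) →
      entryR A (i + 1) j = entryR A i k → (D (i + 1) j ↔ D i k))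
    {s t : ℝ} (hs : |s| ≤ t) (hgap : ∀ a ∈ Set.range A, ∀ b ∈ Set.range A, a < b → t ≤ b - a) :
    bump A D s ∈ GTPoly n lam := by
  have hD' : ∀ i j, D i j → i + j < n := fun i j h => (hD i j h).2
  have hgap' : ∀ i j k l, i < n → j < n → k < n → l < n →
      entryR A i j < entryR A k l → t ≤ entryR A k l - entryR A i j :=
    fun i j k l hi hj hk hl =>
      hgap _ (entryR_mem_range A hi hj) _ (entryR_mem_range A hk hl)
  refine ⟨fun j => ?_, fun i j hij => ?_, fun p hp => ?_⟩
  · rw [entryR_bump A hD', if_neg fun h => (hD 0 j h).1.false, add_zero, hA.1 j]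
  · rw [entryR_bump A hD', entryR_bump A hD', entryR_bump A hD']
    obtain ⟨hle, hle'⟩ := hA.2.1 i j hij
    exact ⟨add_ite_le_add_ite hs hle (hgap' _ _ _ _ (by omega) (by omega) (by omega) (by omega))
        (hclosed i j j hij (.inl rfl)),
      add_ite_le_add_ite hs hle' (hgap' _ _ _ _ (by omega) (by omega) (by omega) (by omega))
        fun h => (hclosed i j (j + 1) hij (.inr rfl) h.symm).symm⟩
  · have hnD : ¬ D p.1 p.2 := fun h => hp (hD _ _ h).2
    simp only [bump, if_neg hnD, add_zero, hA.2.2 p hp]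

lemma eq_col_of_lt_of_lt (hA : A ∈ GTPoly n lam) {i j j' : ℕ} (hj : i + 1 + j < n)
    (hj' : i + 1 + j' < n) (hlt : entryR A (i + 1) j < entryR A i j)
    (hgt : entryR A i (j + 1) < entryR A (i + 1) j)
    (heq : entryR A (i + 1) j' = entryR A (i + 1) j) : j' = j := by
  rcases lt_trichotomy j' j with h | h | h
  · have := entryR_le_of_le (i := i) hA (show j' + 1 ≤ j by omega) (by omega)
    linarith [(hA.2.1 i j' hj').2]
  · exact h
  · have := entryR_le_of_le (i := i) hA (show j + 1 ≤ j' by omega) (by omega)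
    linarith [(hA.2.1 i j' hj').1]

lemma notMem_extremePoints_of_lt_of_lt (hA : A ∈ GTPoly n lam) {i j : ℕ} (hij : i + 1 + j < n)
    (hlt : entryR A (i + 1) j < entryR A i j) (hgt : entryR A i (j + 1) < entryR A (i + 1) j) :
    A ∉ Set.extremePoints ℝ (GTPoly n lam) := by
  set v := entryR A (i + 1) j
  set D : ℕ → ℕ → Prop := fun i' j' => i + 1 ≤ i' ∧ i' + j' < n ∧ entryR A i' j' = v
  have hD : ∀ i' j', D i' j' → 0 < i' ∧ i' + j' < n := fun i' j' h => ⟨by omega, h.2.1⟩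
  have hclosed : ∀ i' j' k, i' + 1 + j' < n → (k = j' ∨ k = j' + 1) →
      entryR A (i' + 1) j' = entryR A i' k → (D (i' + 1) j' ↔ D i' k) := by
    intro i' j' k hi' hk heq
    rcases Nat.lt_or_ge i' (i + 1) with hi | hi
    · refine iff_of_false (fun ⟨hrow, _, hv⟩ => ?_) (fun h => by omega)
      obtain rfl : i' = i := by omega
      obtain rfl : j' = j := eq_col_of_lt_of_lt hA hij hi' hlt hgt hv
      rcases hk with rfl | rfl <;> linarith
    · simp only [D, heq]
      exact ⟨fun h => ⟨hi, by omega, h.2.2⟩, fun h => ⟨by omega, by omega, h.2.2⟩⟩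
  obtain ⟨t, ht, hgap⟩ := (Set.finite_range A).exists_pos_le_sub_of_lt
  intro hext
  have hbump := hext.2 (bump_mem hA hD hclosed (abs_of_pos ht).le hgap)
    (bump_mem hA hD hclosed (by rw [abs_neg, abs_of_pos ht]) hgap) (mem_openSegment_bump A D t)
  have hv := congrArg (entryR · (i + 1) j) hbump
  rw [entryR_bump A (fun i' j' h => (hD i' j' h).2),
    if_pos (show D (i + 1) j from ⟨le_rfl, by omega, rfl⟩)] at hv
  linarith

end GTPoly

theorem statement3_general (n : ℕ) (lam : Fin n → ℤ)
    (A : GTIdx n → ℝ) (hA : A ∈ GTPoly n (fun i => (lam i : ℝ))) :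
    A ∈ Set.extremePoints ℝ (GTPoly n (fun i => (lam i : ℝ))) ↔
      ∀ i j : ℕ, i + 1 + j < n →
        entryR A (i + 1) j = entryR A i j ∨ entryR A (i + 1) j = entryR A i (j + 1) := by
  refine ⟨fun hext i j hij => ?_, GTPoly.mem_extremePoints_of_eq_upper hA⟩
  by_contra! hne
  exact GTPoly.notMem_extremePoints_of_lt_of_lt hA hij
    ((hA.2.1 i j hij).1.lt_of_ne hne.1) ((hA.2.1 i j hij).2.lt_of_ne (Ne.symm hne.2)) hext

/-- for regular λ, a point A of GT_λ is a vertex (extreme point) iff every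
entry A_{i,j} with i ≥ 1 equals one of its upper neighbours. -/
theorem statement3 (n : ℕ) (lam : Fin n → ℤ)
    (hreg : ∀ i j : Fin n, i < j → lam j < lam i)
    (A : GTIdx n → ℝ) (hA : A ∈ GTPoly n (fun i => (lam i : ℝ))) :
    A ∈ Set.extremePoints ℝ (GTPoly n (fun i => (lam i : ℝ))) ↔
      ∀ i j : ℕ, i + 1 + j < n →
        entryR A (i + 1) j = entryR A i j ∨ entryR A (i + 1) j = entryR A i (j + 1) :=
  statement3_general n lam A hA
end

section
/- Each connected component Δ of the graph Γ_v associated to a vertex v of GT_λ satisfies property A: if Δ contains both nodes (i,j) and (i,j+1), then Δ also contains their common neighbors (i−1,j+1) and (i+1,j). -/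
open scoped BigOperators Classical

/-! Entries are constant along paths of Γ_v, so the entries at (i, j) and (i, j+1) coincide.
In row 0 this contradicts the regularity of λ. Otherwise the interlacing inequalities
a_{i,j+1} ≤ a_{i+1,j} ≤ a_{i,j} and a_{i,j+1} ≤ a_{i-1,j+1} ≤ a_{i,j} force both common
neighbours to carry the same value, so they are adjacent to (i, j) in Γ_v. -/

lemma entryR_of_node {n : ℕ} (A : GTIdx n → ℝ) (p : GTNode n) {i j : ℕ}
    (h1 : (p.1.1 : ℕ) = i) (h2 : (p.1.2 : ℕ) = j) : entryR A i j = A p.1 := by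
  subst h1 h2
  rw [entryR, dif_pos ⟨p.1.1.isLt, p.1.2.isLt⟩]

namespace GTPoly

variable {n : ℕ} {lam : Fin n → ℝ} {A : GTIdx n → ℝ}

lemma entryR_zero_ne_succ (hA : A ∈ GTPoly n lam) (hlam : StrictAnti lam) {j : ℕ}
    (hj : j + 1 < n) : entryR A 0 j ≠ entryR A 0 (j + 1) := by
  have h₀ : entryR A 0 j = lam ⟨j, by omega⟩ := hA.1 ⟨j, by omega⟩
  have h₁ : entryR A 0 (j + 1) = lam ⟨j + 1, hj⟩ := hA.1 ⟨j + 1, hj⟩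
  rw [h₀, h₁]
  exact (hlam (Fin.mk_lt_mk.2 (Nat.lt_succ_self j))).ne'

lemma entryR_succ_eq_of_eq (hA : A ∈ GTPoly n lam) {i j : ℕ} (h : i + 1 + j < n)
    (hrow : entryR A i j = entryR A i (j + 1)) : entryR A (i + 1) j = entryR A i j := by
  obtain ⟨hle, hge⟩ := hA.2.1 i j h
  linarith

lemma entryR_eq_of_succ_eq (hA : A ∈ GTPoly n lam) {i j : ℕ} (h : i + 1 + (j + 1) < n)
    (hrow : entryR A (i + 1) j = entryR A (i + 1) (j + 1)) :
    entryR A i (j + 1) = entryR A (i + 1) j := by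
  have hle := (hA.2.1 i j (by omega)).2
  have hge := (hA.2.1 i (j + 1) h).1
  linarith

end GTPoly

namespace Gamma

variable {n : ℕ} {A : GTIdx n → ℝ}

lemma apply_eq_of_reachable {p q : GTNode n} (h : (Gamma n A).Reachable p q) : A p.1 = A q.1 := by
  obtain ⟨w⟩ := h
  induction w with
  | nil => rfl
  | cons h _ ih => exact h.2.trans ih

lemma exists_adj_below (p : GTNode n) (h : (p.1.1 : ℕ) + 1 + p.1.2 < n)
    (he : entryR A (p.1.1 + 1) p.1.2 = A p.1) :
    ∃ r : GTNode n, (r.1.1 : ℕ) = p.1.1 + 1 ∧ (r.1.2 : ℕ) = p.1.2 ∧ (Gamma n A).Adj p r := by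
  let r : GTNode n := ⟨(⟨p.1.1 + 1, by omega⟩, p.1.2), h⟩
  refine ⟨r, rfl, rfl, Or.inr ⟨r.2, p.2, rfl, Or.inl rfl⟩, ?_⟩
  rw [← he, entryR_of_node A r rfl rfl]

lemma exists_adj_above (p : GTNode n) {i : ℕ} (hi : (p.1.1 : ℕ) = i + 1)
    (he : entryR A i (p.1.2 + 1) = A p.1) :
    ∃ r : GTNode n, (r.1.1 : ℕ) + 1 = p.1.1 ∧ (r.1.2 : ℕ) = p.1.2 + 1 ∧ (Gamma n A).Adj p r := by
  have hp : (p.1.1 : ℕ) + p.1.2 < n := p.2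
  let r : GTNode n := ⟨(⟨i, by omega⟩, ⟨p.1.2 + 1, by omega⟩), show i + (p.1.2 + 1) < n by omega⟩
  refine ⟨r, hi.symm, rfl, Or.inl ⟨p.2, r.2, hi.symm, Or.inr rfl⟩, ?_⟩
  rw [← he, entryR_of_node A r rfl rfl]

end Gamma

/-- each connected component of Γ_v has property A: if it contains (i,j)
and (i,j+1) then i ≥ 1 and it also contains (i+1,j) and (i-1,j+1). -/
theorem statement6 (n : ℕ) (lam : Fin n → ℤ)
    (hreg : ∀ i j : Fin n, i < j → lam j < lam i)
    (A : GTIdx n → ℝ)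
    (hA : A ∈ Set.extremePoints ℝ (GTPoly n (fun i => (lam i : ℝ))))
    (i j : ℕ) (p q : GTNode n)
    (hp1 : (p.1.1 : ℕ) = i) (hp2 : (p.1.2 : ℕ) = j)
    (hq1 : (q.1.1 : ℕ) = i) (hq2 : (q.1.2 : ℕ) = j + 1)
    (hreach : (Gamma n A).Reachable p q) :
    1 ≤ i ∧
    (∃ r : GTNode n, (r.1.1 : ℕ) = i + 1 ∧ (r.1.2 : ℕ) = j ∧ (Gamma n A).Reachable p r) ∧
    (∃ r : GTNode n, (r.1.1 : ℕ) + 1 = i ∧ (r.1.2 : ℕ) = j + 1 ∧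
      (Gamma n A).Reachable p r) := by
  have hmem := hA.1
  have hlam : StrictAnti (fun k => (lam k : ℝ)) := fun a b hab => Int.cast_lt.2 (hreg a b hab)
  have hq : i + (j + 1) < n := hq1 ▸ hq2 ▸ q.2
  have hrow : entryR A i j = entryR A i (j + 1) := by
    rw [entryR_of_node A p hp1 hp2, entryR_of_node A q hq1 hq2,
      Gamma.apply_eq_of_reachable hreach]
  have hi : 1 ≤ i := Nat.one_le_iff_ne_zero.2 fun h0 => by
    subst h0
    exact GTPoly.entryR_zero_ne_succ hmem hlam (by omega) hrow
  refine ⟨hi, ?_, ?_⟩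
  · obtain ⟨r, hr1, hr2, hadj⟩ := Gamma.exists_adj_below (A := A) p (by omega) (by
      rw [hp1, hp2, GTPoly.entryR_succ_eq_of_eq hmem (by omega) hrow, entryR_of_node A p hp1 hp2])
    exact ⟨r, hr1.trans (congrArg (· + 1) hp1), hr2.trans hp2, hadj.reachable⟩
  · obtain ⟨i, rfl⟩ : ∃ i', i = i' + 1 := ⟨i - 1, by omega⟩
    obtain ⟨r, hr1, hr2, hadj⟩ := Gamma.exists_adj_above (A := A) p hp1 (by
      rw [hp2, GTPoly.entryR_eq_of_succ_eq hmem (by omega) hrow, entryR_of_node A p hp1 hp2])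
    exact ⟨r, hr1.trans hp1, hr2.trans (congrArg (· + 1) hp2), hadj.reachable⟩
end

section
/- For a regular weight λ, a vertex v of GT_λ is a simplicial vertex (i.e., v is contained in exactly dim GT_λ = n(n+1)/2 − n facets) if and only if the associated graph Γ_v is acyclic, equivalently, if and only if no connected component of Γ_v contains two nodes from the same row. -/
open scoped BigOperators Classical

/-! At a vertex of `GT_λ` every non-top entry meets one of its two interlacing inequalities with
equality: otherwise the indicator of the entries equal to it, in its row and below, is a direction
in which one can move both ways inside the polytope. Hence the tight inequalities number
`dim GT_λ` plus the positions where both are tight, and both are tight at `(i+1, j)` exactly when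
row `i` has a tie `v i j = v i (j+1)`, i.e. exactly when some component of `Γ_v` meets a row twice.
A tie in a row below the top closes a diamond-shaped 4-cycle, and regularity excludes ties in the
top row; conversely the highest node of a cycle has two neighbours in the row below it, lying in
one component. -/

open Filter Topology

namespace SimpleGraph

variable {V : Type*} {G : SimpleGraph V}

theorem isAcyclic_of_graded (r : V → ℕ)
    (hadj : ∀ ⦃u v⦄, G.Adj u v → r u = r v + 1 ∨ r v = r u + 1)
    (hinj : ∀ ⦃u v⦄, G.Reachable u v → r u = r v → u = v) : G.IsAcyclic := by
  intro v c hc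
  obtain ⟨p, hp, hmax⟩ := c.support.toFinset.exists_max_image r ⟨v, by simp⟩
  rw [List.mem_toFinset] at hp
  have hbelow : ∀ w ∈ (c.rotate p hp).support, G.Adj p w → r w + 1 = r p := by
    intro w hw hpw
    have := hmax w (by simpa using hw)
    rcases hadj hpw with h | h <;> omega
  have hc' := hc.rotate hp
  have hs := (c.rotate p hp).adj_snd hc'.not_nil
  have hq := ((c.rotate p hp).adj_penultimate hc'.not_nil).symm
  refine hc'.snd_ne_penultimate (hinj (hs.symm.reachable.trans hq.reachable) ?_)
  have h₁ : r (c.rotate p hp).snd + 1 = r p := hbelow _ (Walk.getVert_mem_support _ _) hs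
  have h₂ : r (c.rotate p hp).penultimate + 1 = r p := hbelow _ (Walk.getVert_mem_support _ _) hq
  omega

theorem not_isAcyclic_of_square {a b c d : V} (hab : G.Adj a b) (hac : G.Adj a c)
    (hbd : G.Adj b d) (hcd : G.Adj c d) (hbc : b ≠ c) (had : a ≠ d) : ¬ G.IsAcyclic := by
  intro hG
  have hpath {x : V} (hax : G.Adj a x) (hxd : G.Adj x d) :
      (Walk.cons hax (Walk.cons hxd .nil)).IsPath := by
    simp [Walk.cons_isPath_iff, hax.ne, hxd.ne, had]
  have := (hG.subsingleton_path a d).elim ⟨_, hpath hab hbd⟩ ⟨_, hpath hac hcd⟩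
  exact hbc (congrArg (fun p : G.Path a d => p.1.snd) this)

end SimpleGraph

theorem eq_zero_of_eventually_add_smul_mem {E : Type*} [AddCommGroup E] [Module ℝ E] {P : Set E}
    {a x : E} (ha : a ∈ P.extremePoints ℝ) (hx : ∀ᶠ s in 𝓝 (0 : ℝ), a + s • x ∈ P) : x = 0 := by
  have hneg : ∀ᶠ s in 𝓝 (0 : ℝ), a + (-s) • x ∈ P :=
    (continuous_neg.tendsto' 0 0 neg_zero).eventually hx
  have hpos : ∀ᶠ s in 𝓝[>] (0 : ℝ), 0 < s ∧ a + s • x ∈ P ∧ a + (-s) • x ∈ P :=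
    Filter.Eventually.and self_mem_nhdsWithin (nhdsWithin_le_nhds (hx.and hneg))
  obtain ⟨s, hs, hsP, hsN⟩ := hpos.exists
  have hseg : a ∈ openSegment ℝ (a + (-s) • x) (a + s • x) :=
    ⟨1 / 2, 1 / 2, by norm_num, by norm_num, by norm_num, by module⟩
  have := ha.2 hsN hsP hseg
  rw [add_eq_left, smul_eq_zero] at this
  exact this.resolve_left (neg_ne_zero.mpr (ne_of_gt hs))

theorem Set.ncard_setOf_and_ite_bool {α β : Type*} (L : Finset (α × β))
    (P Q : α → β → Prop) :
    {x : α × β × Bool | (x.1, x.2.1) ∈ L ∧ if x.2.2 then P x.1 x.2.1 else Q x.1 x.2.1}.ncard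
      = (L.filter fun k => P k.1 k.2).card + (L.filter fun k => Q k.1 k.2).card := by
  let e (b : Bool) (k : α × β) : α × β × Bool := (k.1, k.2, b)
  have he (b : Bool) : Function.Injective (e b) := fun k l h => by simpa [e, Prod.ext_iff] using h
  have : {x : α × β × Bool | (x.1, x.2.1) ∈ L ∧ if x.2.2 then P x.1 x.2.1 else Q x.1 x.2.1}
      = ↑((L.filter fun k => P k.1 k.2).image (e true)
          ∪ (L.filter fun k => Q k.1 k.2).image (e false)) := by
    ext ⟨a, b, c⟩; cases c <;> simp [e]
  rw [this, Set.ncard_coe_finset, Finset.card_union_of_disjoint (by simp [Finset.disjoint_left, e]),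
    Finset.card_image_of_injective _ (he _), Finset.card_image_of_injective _ (he _)]

section GelfandTsetlin

open Finset

variable {n : ℕ}

def GTNode.of (i j : ℕ) (h : i + j < n) : GTNode n :=
  ⟨(⟨i, by omega⟩, ⟨j, by omega⟩), h⟩

@[simp] theorem GTNode.of_row {i j : ℕ} (h : i + j < n) : ((GTNode.of i j h).1.1 : ℕ) = i := rfl

@[simp] theorem GTNode.of_col {i j : ℕ} (h : i + j < n) : ((GTNode.of i j h).1.2 : ℕ) = j := rfl

theorem GTNode.eq_iff {p q : GTNode n} :
    p = q ↔ (p.1.1 : ℕ) = q.1.1 ∧ (p.1.2 : ℕ) = q.1.2 := by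
  simp [Subtype.ext_iff, Prod.ext_iff, Fin.ext_iff]

theorem apply_GTNode_of (A : GTIdx n → ℝ) {i j : ℕ} (h : i + j < n) :
    A (GTNode.of i j h).1 = entryR A i j := by
  rw [entryR, dif_pos ⟨by omega, by omega⟩]; rfl

theorem apply_eq_entryR (A : GTIdx n → ℝ) (p : GTNode n) : A p.1 = entryR A p.1.1 p.1.2 := by
  rw [entryR, dif_pos ⟨p.1.1.isLt, p.1.2.isLt⟩]

theorem entryR_add_smul (A x : GTIdx n → ℝ) (s : ℝ) (i j : ℕ) :
    entryR (A + s • x) i j = entryR A i j + s * entryR x i j := by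
  unfold entryR
  split_ifs <;> simp

def IsInterlacing (n : ℕ) (A : GTIdx n → ℝ) : Prop :=
  ∀ i j : ℕ, i + 1 + j < n →
    entryR A (i + 1) j ≤ entryR A i j ∧ entryR A i (j + 1) ≤ entryR A (i + 1) j

theorem isInterlacing_of_mem_GTPoly {lam : Fin n → ℝ} {A : GTIdx n → ℝ}
    (hA : A ∈ GTPoly n lam) :
    IsInterlacing n A :=
  hA.2.1

namespace IsInterlacing

variable {A : GTIdx n → ℝ} {i j j' : ℕ}

theorem entryR_antitone (hI : IsInterlacing n A) (h : i + j' < n) (hjj : j ≤ j') :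
    entryR A i j' ≤ entryR A i j := by
  induction j', hjj using Nat.le_induction with
  | base => rfl
  | succ k hk ih =>
    have := hI i k (by omega)
    linarith [ih (by omega)]

theorem entryR_succ_eq_of_eq (hI : IsInterlacing n A) (h : i + j' < n) (hjj : j < j')
    (e : entryR A i j = entryR A i j') : entryR A i j = entryR A i (j + 1) :=
  le_antisymm (e ▸ hI.entryR_antitone h hjj) (hI.entryR_antitone (by omega) (by omega))

theorem entryR_eq_succ_of_eq (hI : IsInterlacing n A) (h : i + j' + 1 < n) (hjj : j ≤ j')
    (e : entryR A i j = entryR A i (j' + 1)) : entryR A i j' = entryR A i (j' + 1) :=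
  le_antisymm (e ▸ hI.entryR_antitone (by omega) hjj) (hI.entryR_antitone h (by omega))

theorem below_eq_of_eq (hI : IsInterlacing n A) (h : i + j + 1 < n)
    (e : entryR A i j = entryR A i (j + 1)) :
    entryR A (i + 1) j = entryR A i j ∧ entryR A (i + 1) j = entryR A i (j + 1) := by
  have := hI i j (by omega)
  constructor <;> linarith

theorem above_eq_of_eq (hI : IsInterlacing n A) (h : i + 1 + j + 1 < n)
    (e : entryR A (i + 1) j = entryR A (i + 1) (j + 1)) :
    entryR A i (j + 1) = entryR A (i + 1) j ∧ entryR A i (j + 1) = entryR A (i + 1) (j + 1) := by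
  have := hI i j (by omega)
  have := hI i (j + 1) (by omega)
  constructor <;> linarith

theorem tight_of_entryR_eq (hI : IsInterlacing n A) (h : i + 1 + j < n) (h' : i + 1 + j' < n)
    (hne : j' ≠ j) (e : entryR A (i + 1) j' = entryR A (i + 1) j) :
    entryR A (i + 1) j = entryR A i j ∨ entryR A (i + 1) j = entryR A i (j + 1) := by
  rcases lt_or_gt_of_ne hne with hlt | hlt
  · obtain ⟨k, rfl⟩ : ∃ k, j = k + 1 := ⟨j - 1, by omega⟩
    exact Or.inl (hI.above_eq_of_eq (by omega)
      (hI.entryR_eq_succ_of_eq (j' := k) (by omega) (by omega) e)).2.symm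
  · exact Or.inr (hI.above_eq_of_eq (by omega) (hI.entryR_succ_eq_of_eq h' hlt e.symm)).1.symm

end IsInterlacing

section Gamma

variable {A : GTIdx n → ℝ}

theorem gamma_adj_vert {i j : ℕ} (h : i + 1 + j < n) (e : entryR A (i + 1) j = entryR A i j) :
    (Gamma n A).Adj (GTNode.of (i + 1) j h) (GTNode.of i j (by omega)) :=
  ⟨Or.inl ⟨h, by show i + j < n; omega, rfl, Or.inl rfl⟩,
    by simpa only [apply_GTNode_of] using e⟩

theorem gamma_adj_diag {i j : ℕ} (h : i + 1 + j < n)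
    (e : entryR A (i + 1) j = entryR A i (j + 1)) :
    (Gamma n A).Adj (GTNode.of (i + 1) j h) (GTNode.of i (j + 1) (by omega)) :=
  ⟨Or.inl ⟨h, by show i + (j + 1) < n; omega, rfl, Or.inr rfl⟩,
    by simpa only [apply_GTNode_of] using e⟩

theorem gamma_adj_row {p q : GTNode n} (h : (Gamma n A).Adj p q) :
    (p.1.1 : ℕ) = q.1.1 + 1 ∨ (q.1.1 : ℕ) = p.1.1 + 1 := by
  rcases h.1 with h' | h'
  · exact Or.inl h'.2.2.1.symm
  · exact Or.inr h'.2.2.1.symm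

theorem gamma_reachable_apply_eq {p q : GTNode n} (h : (Gamma n A).Reachable p q) :
    A p.1 = A q.1 := by
  obtain ⟨w⟩ := h
  induction w with
  | nil => rfl
  | cons h _ ih => exact h.2.trans ih

end Gamma

def HasRowTie (n : ℕ) (A : GTIdx n → ℝ) : Prop :=
  ∃ i j : ℕ, i + j + 1 < n ∧ entryR A i j = entryR A i (j + 1)

variable {A : GTIdx n → ℝ}

theorem not_hasRowTie_iff_gamma_row_injective (hI : IsInterlacing n A) :
    ¬ HasRowTie n A ↔
      ∀ p q : GTNode n, (Gamma n A).Reachable p q → p.1.1 = q.1.1 → p = q := by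
  constructor
  · intro hnt p q hpq hrow
    by_contra hne
    have hcol : (p.1.2 : ℕ) ≠ q.1.2 := fun hc =>
      hne (GTNode.eq_iff.2 ⟨congrArg Fin.val hrow, hc⟩)
    have heq := gamma_reachable_apply_eq hpq
    rw [apply_eq_entryR A p, apply_eq_entryR A q, ← hrow] at heq
    have hp := p.2; have hq := q.2
    unfold GTValid at hp hq
    rw [← hrow] at hq
    rcases lt_or_gt_of_ne hcol with hlt | hlt
    · exact hnt ⟨_, _, by omega, hI.entryR_succ_eq_of_eq hq hlt heq⟩
    · exact hnt ⟨_, _, by omega, hI.entryR_succ_eq_of_eq hp hlt heq.symm⟩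
  · rintro hinj ⟨i, j, hij, e⟩
    obtain ⟨hv, hd⟩ := hI.below_eq_of_eq hij e
    have := hinj _ _ ((gamma_adj_vert (by omega) hv).symm.reachable.trans
      (gamma_adj_diag (by omega) hd).reachable) rfl
    simp [GTNode.eq_iff] at this

theorem not_hasRowTie_of_isAcyclic {lam : Fin n → ℤ}
    (hreg : ∀ i j : Fin n, i < j → lam j < lam i)
    (hTop : ∀ j : Fin n, entryR A 0 j = lam j) (hI : IsInterlacing n A)
    (hac : (Gamma n A).IsAcyclic) : ¬ HasRowTie n A := by
  rintro ⟨i, j, hij, e⟩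
  cases i with
  | zero =>
    have := hreg ⟨j, by omega⟩ ⟨j + 1, by omega⟩ (Fin.mk_lt_mk.2 j.lt_succ_self)
    rw [hTop ⟨j, by omega⟩, hTop ⟨j + 1, by omega⟩] at e
    exact this.ne (Int.cast_injective e).symm
  | succ k =>
    -- a tie in row k+1 closes the diamond (k+2, j), (k+1, j), (k+1, j+1), (k, j+1)
    obtain ⟨hv, hd⟩ := hI.below_eq_of_eq hij e
    obtain ⟨hd', hv'⟩ := hI.above_eq_of_eq (by omega) e
    refine SimpleGraph.not_isAcyclic_of_square (gamma_adj_vert (by omega) hv)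
      (gamma_adj_diag (by omega) hd) (gamma_adj_diag (by omega) hd'.symm)
      (gamma_adj_vert (by omega) hv'.symm) ?_ ?_ hac <;> simp [GTNode.eq_iff]

theorem eventually_add_smul_mem_GTPoly {lam : Fin n → ℝ} {x : GTIdx n → ℝ}
    (hA : A ∈ GTPoly n lam)
    (hx_top : ∀ j : Fin n, entryR x 0 j = 0) (hx_inv : ∀ p, ¬ GTValid n p → x p = 0)
    (hx_vert : ∀ i j, i + 1 + j < n → entryR A (i + 1) j = entryR A i j →
      entryR x (i + 1) j = entryR x i j)
    (hx_diag : ∀ i j, i + 1 + j < n → entryR A (i + 1) j = entryR A i (j + 1) →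
      entryR x (i + 1) j = entryR x i (j + 1)) :
    ∀ᶠ s in 𝓝 (0 : ℝ), A + s • x ∈ GTPoly n lam := by
  obtain ⟨hTop, hI, hInv⟩ := hA
  -- a tight inequality stays an equality along x, a strict one survives small perturbations
  have hineq {a b c d : ℝ} (h : a ≤ c) (hbd : a = c → b = d) :
      ∀ᶠ s in 𝓝 (0 : ℝ), a + s * b ≤ c + s * d := by
    rcases h.eq_or_lt with rfl | hlt
    · simp [hbd rfl]
    · exact (ContinuousAt.eventually_lt (f := fun s => a + s * b) (by fun_prop) (by fun_prop)
        (by simpa using hlt)).mono fun _ => le_of_lt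
  have hint : ∀ᶠ s in 𝓝 (0 : ℝ), ∀ i ∈ range n, ∀ j ∈ range n, i + 1 + j < n →
      entryR A (i + 1) j + s * entryR x (i + 1) j ≤ entryR A i j + s * entryR x i j ∧
      entryR A i (j + 1) + s * entryR x i (j + 1) ≤
        entryR A (i + 1) j + s * entryR x (i + 1) j := by
    simp only [eventually_all_finset, eventually_imp_distrib_left]
    intro i _ j _ hij
    exact (hineq (hI i j hij).1 (hx_vert i j hij)).and
      (hineq (hI i j hij).2 fun e => (hx_diag i j hij e.symm).symm)
  filter_upwards [hint] with s hs
  refine ⟨fun j => ?_, fun i j hij => ?_, fun p hp => ?_⟩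
  · rw [entryR_add_smul, hx_top, mul_zero, add_zero, hTop]
  · simp only [entryR_add_smul]
    exact hs i (mem_range.2 (by omega)) j (mem_range.2 (by omega)) hij
  · simp [hInv p hp, hx_inv p hp]

theorem exists_tight_of_mem_extremePoints {lam : Fin n → ℝ}
    (hA : A ∈ (GTPoly n lam).extremePoints ℝ)
    {i j : ℕ} (hij : i + 1 + j < n) :
    entryR A (i + 1) j = entryR A i j ∨ entryR A (i + 1) j = entryR A i (j + 1) := by
  by_contra! ⟨hvert, hdiag⟩
  have hI := isInterlacing_of_mem_GTPoly hA.1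
  set c := entryR A (i + 1) j
  have honly : ∀ j', i + 1 + j' < n → entryR A (i + 1) j' = c → j' = j := fun j' hj' e =>
    by_contra fun hne => (hI.tight_of_entryR_eq hij hj' hne e).elim hvert hdiag
  let x : GTIdx n → ℝ := fun p => if GTValid n p ∧ i + 1 ≤ p.1 ∧ A p = c then 1 else 0
  have hx {i' j' : ℕ} (h : i' + j' < n) :
      entryR x i' j' = if i + 1 ≤ i' ∧ entryR A i' j' = c then 1 else 0 := by
    simp only [← apply_GTNode_of x h, x, ← apply_GTNode_of A h, (GTNode.of i' j' h).2, true_and,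
      GTNode.of_row]
  have hx_up {i' j' j'' : ℕ} (h : i' + 1 + j' < n) (h'' : i' + j'' < n)
      (e : entryR A (i' + 1) j' = entryR A i' j'') (hne : i' = i → j' = j → False) :
      entryR x (i' + 1) j' = entryR x i' j'' := by
    rw [hx h, hx h'', e]
    by_cases hi : i + 1 ≤ i'
    · simp [hi, show i + 1 ≤ i' + 1 by omega]
    · rw [if_neg (c := i + 1 ≤ i' ∧ _) fun h => hi h.1, if_neg]
      rintro ⟨hi', hc⟩
      obtain rfl : i' = i := by omega
      exact hne rfl (honly j' h (e.trans hc))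
  have hx0 := eq_zero_of_eventually_add_smul_mem hA <| eventually_add_smul_mem_GTPoly hA.1
    (fun j' => by rw [hx (by omega)]; simp)
    (fun p hp => if_neg fun h => hp h.1)
    (fun i' j' h e => hx_up h (by omega) e fun hi hj => hvert (by subst hi hj; exact e))
    (fun i' j' h e => hx_up h (by omega) e fun hi hj => hdiag (by subst hi hj; exact e))
  have := congrFun hx0 (GTNode.of (i + 1) j hij).1
  simp [(GTNode.of (i + 1) j hij).2, apply_GTNode_of, c] at this

def lowerPositions (n : ℕ) : Finset (ℕ × ℕ) :=
  (range n ×ˢ range n).filter fun k => k.1 + 1 + k.2 < n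

theorem mem_lowerPositions {k : ℕ × ℕ} : k ∈ lowerPositions n ↔ k.1 + 1 + k.2 < n := by
  simp only [lowerPositions, mem_filter, mem_product, mem_range, and_iff_right_iff_imp]
  omega

theorem card_lowerPositions_eq_sum (n : ℕ) : (lowerPositions n).card = ∑ i ∈ range n, i := by
  induction n with
  | zero => rfl
  | succ n ih =>
    have : lowerPositions (n + 1) =
        (range n).image (fun i => (i, 0)) ∪ (lowerPositions n).image fun k => (k.1, k.2 + 1) := by
      ext ⟨a, b⟩
      cases b <;> simp [mem_lowerPositions]; omega
    rw [this, card_union_of_disjoint (by simp [disjoint_left]),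
      card_image_of_injective _ (fun a b h => by simpa using h),
      card_image_of_injective _ (fun a b h => by simpa [Prod.ext_iff] using h),
      card_range, ih, sum_range_succ, add_comm]

theorem card_lowerPositions (n : ℕ) : (lowerPositions n).card = n * (n + 1) / 2 - n := by
  have h := sum_range_id_mul_two n
  have : n * (n + 1) = n * (n - 1) + 2 * n := by
    cases n with
    | zero => rfl
    | succ m => simp only [Nat.add_sub_cancel]; ring
  rw [card_lowerPositions_eq_sum]
  omega

theorem ncard_tight_eq {lam : Fin n → ℝ} (hA : A ∈ (GTPoly n lam).extremePoints ℝ) :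
    {x : ℕ × ℕ × Bool | x.1 + 1 + x.2.1 < n ∧
        (if x.2.2 then entryR A (x.1 + 1) x.2.1 = entryR A x.1 x.2.1
         else entryR A (x.1 + 1) x.2.1 = entryR A x.1 (x.2.1 + 1))}.ncard
      = (lowerPositions n).card + ((lowerPositions n).filter fun k =>
          entryR A (k.1 + 1) k.2 = entryR A k.1 k.2 ∧
          entryR A (k.1 + 1) k.2 = entryR A k.1 (k.2 + 1)).card := by
  simp only [← mem_lowerPositions (k := (_, _))]
  refine (Set.ncard_setOf_and_ite_bool (lowerPositions n)
    (fun i j => entryR A (i + 1) j = entryR A i j)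
    (fun i j => entryR A (i + 1) j = entryR A i (j + 1))).trans ?_
  rw [← card_union_add_card_inter, ← filter_or, ← filter_and,
    filter_true_of_mem fun k hk => exists_tight_of_mem_extremePoints hA (mem_lowerPositions.1 hk)]

theorem filter_doubly_tight_eq_empty_iff (hI : IsInterlacing n A) :
    ((lowerPositions n).filter fun k =>
        entryR A (k.1 + 1) k.2 = entryR A k.1 k.2 ∧
        entryR A (k.1 + 1) k.2 = entryR A k.1 (k.2 + 1)) = ∅ ↔ ¬ HasRowTie n A := by
  rw [filter_eq_empty_iff]
  constructor
  · rintro h ⟨i, j, hij, e⟩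
    exact h (x := (i, j)) (mem_lowerPositions.2 (by dsimp only; omega)) (hI.below_eq_of_eq hij e)
  · rintro h k hk ⟨e₁, e₂⟩
    have := mem_lowerPositions.1 hk
    exact h ⟨k.1, k.2, by omega, e₁.symm.trans e₂⟩

end GelfandTsetlin

/-- a vertex v of GT_λ (λ regular) lies on exactly dim GT_λ = n(n+1)/2 - n
facets (equivalently, exactly that many defining inequalities are tight at v) iff Γ_v is
acyclic, iff no connected component of Γ_v contains two nodes from the same row. -/
theorem statement7 (n : ℕ) (lam : Fin n → ℤ)
    (hreg : ∀ i j : Fin n, i < j → lam j < lam i)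
    (A : GTIdx n → ℝ)
    (hA : A ∈ Set.extremePoints ℝ (GTPoly n (fun i => (lam i : ℝ)))) :
    ({x : ℕ × ℕ × Bool | x.1 + 1 + x.2.1 < n ∧
        (if x.2.2 then entryR A (x.1 + 1) x.2.1 = entryR A x.1 x.2.1
         else entryR A (x.1 + 1) x.2.1 = entryR A x.1 (x.2.1 + 1))}.ncard
        = n * (n + 1) / 2 - n ↔ (Gamma n A).IsAcyclic) ∧
    ((Gamma n A).IsAcyclic ↔
      ∀ p q : GTNode n, (Gamma n A).Reachable p q → p.1.1 = q.1.1 → p = q) := by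
  have hI := isInterlacing_of_mem_GTPoly hA.1
  have hrow := not_hasRowTie_iff_gamma_row_injective hI
  have hac : (Gamma n A).IsAcyclic ↔ ¬ HasRowTie n A :=
    ⟨not_hasRowTie_of_isAcyclic hreg hA.1.1 hI, fun h =>
      SimpleGraph.isAcyclic_of_graded (fun p => (p.1.1 : ℕ)) (fun _ _ => gamma_adj_row)
        fun p q hpq e => hrow.1 h p q hpq (Fin.ext e)⟩
  refine ⟨?_, hac.trans hrow⟩
  rw [ncard_tight_eq hA, ← card_lowerPositions, Nat.add_eq_left, Finset.card_eq_zero,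
    filter_doubly_tight_eq_empty_iff hI, hac]
end
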